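/- Let r ∈ ℝ. Let b_m = m!·[Xᵐ](exp(−rX + X²/2)), where exp(−rX + X²/2) ∈ ℝ[[X]] is the substitution of −rX + (1/2)X² into the exponential power series ∑_{m≥0} Xᵐ/m!, and define the polynomials q_n(X) = ∑_{k=0}^{n} C(n,k)·b_{n−k}·Xᵏ ∈ ℝ[X] (the polynomials whose coefficient array is the exponential Appell array [exp(−rX + X²/2), X] = [exp(rX − X²/2), X]⁻¹). Then q_0 = 1, q_1 = X − r, and for all n ≥ 1, q_{n+1} = (X − r)·q_n + n·q_{n−1}. These are the orthogonal polynomials whose moments are the probabilists' Hermite polynomial values He_n(r). -/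

import Mathlib

/-!
The exponential generating function `E = exp(u)`, `u = -rX + X²/2`, satisfies `E' = (X - r) E`,
which on coefficients is `b (n + 1) = -r b n + n b (n - 1)`. The `q n` form the Appell sequence of
`b`: `q n' = n q (n - 1)` and `q n (0) = b n`. Hence the residual
`R n = q (n + 1) - (X - r) q n - n q (n - 1)` satisfies `R n' = n R (n - 1)` and `R n (0) = 0`,
so every `R n` vanishes by induction on `n`.
-/

/-- Substitution (composition) of formal power series: `psComp h u = h ∘ u`,
the series obtained by substituting `u` (with zero constant term) into `h`. -/
noncomputable def psComp (h u : PowerSeries ℝ) : PowerSeries ℝ :=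
  PowerSeries.mk fun n =>
    ∑ k ∈ Finset.range (n + 1), PowerSeries.coeff (R := ℝ) k h * PowerSeries.coeff (R := ℝ) n (u ^ k)

open PowerSeries

namespace Polynomial

variable {R : Type*} [CommRing R]

noncomputable def appell (b : ℕ → R) (n : ℕ) : R[X] :=
  ∑ k ∈ Finset.range (n + 1), C ((n.choose k : R) * b (n - k)) * X ^ k

variable (b : ℕ → R)

@[simp]
theorem appell_zero : appell b 0 = C (b 0) := by
  simp [appell]

@[simp]
theorem coeff_zero_appell (n : ℕ) : (appell b n).coeff 0 = b n := by
  simp [appell, coeff_X_pow]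

theorem derivative_appell (n : ℕ) : derivative (appell b n) = C (n : R) * appell b (n - 1) := by
  cases n with
  | zero => simp
  | succ n =>
    rw [appell, map_sum, Finset.sum_range_succ', appell, Finset.mul_sum]
    simp only [derivative_C_mul_X_pow, Nat.cast_zero, mul_zero, C_0, zero_mul, add_zero,
      Nat.add_sub_cancel, Nat.add_sub_add_right, ← mul_assoc, ← C_mul]
    refine Finset.sum_congr rfl fun k _ ↦ ?_
    congr 2
    rw [mul_right_comm, ← Nat.cast_mul, ← Nat.add_one_mul_choose_eq, Nat.cast_mul]

variable {b}

/-- At `n = 0` the truncated `n - 1` is harmless: its term carries the factor `n`. -/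
theorem appell_succ [IsAddTorsionFree R] {r : R}
    (hb : ∀ n, b (n + 1) = -r * b n + n * b (n - 1)) (n : ℕ) :
    appell b (n + 1) = (X - C r) * appell b n + C (n : R) * appell b (n - 1) := by
  set res : ℕ → R[X] := fun n ↦
    appell b (n + 1) - ((X - C r) * appell b n + C (n : R) * appell b (n - 1)) with hres
  have hderiv (n : ℕ) : derivative (res n) = C (n : R) * res (n - 1) := by
    rcases n with _ | n
    · simp [hres, derivative_appell]
    · simp only [hres, derivative_sub, derivative_add, derivative_mul, derivative_appell,
        derivative_X, derivative_C, derivative_one, Nat.add_sub_cancel, Nat.cast_add_one, C_add,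
        C_1]
      ring
  have hres_zero (n : ℕ) (h : derivative (res n) = 0) : res n = 0 := by
    simpa [hres, hb, mul_coeff_zero] using eq_C_of_derivative_eq_zero h
  suffices res n = 0 from sub_eq_zero.mp this
  induction n with
  | zero => exact hres_zero 0 (by simp [hderiv])
  | succ n ih => exact hres_zero _ (by simp [hderiv, ih])

end Polynomial

theorem psComp_eq_subst {h u : ℝ⟦X⟧} (hu : constantCoeff u = 0) : psComp h u = h.subst u := by
  ext n
  rw [psComp, coeff_mk, coeff_subst' (HasSubst.of_constantCoeff_zero' hu),
    finsum_eq_sum_of_support_subset _ (s := Finset.range (n + 1))]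
  · simp
  · intro k hk
    contrapose! hk
    rw [Finset.coe_range, Set.mem_Iio, not_lt] at hk
    rw [Function.notMem_support, coeff_of_lt_order _ ((Nat.cast_lt.mpr hk).trans_le
      (le_order_pow_of_constantCoeff_eq_zero k hu)), smul_zero]

theorem PowerSeries.factorial_mul_coeff_succ_of_derivative_eq_X_sub_C_mul {A : Type*}
    [CommRing A] {f : A⟦X⟧} {r : A} (hf : d⁄dX A f = (X - C r) * f) (n : ℕ) :
    (n + 1).factorial * coeff (n + 1) f =
      -r * (n.factorial * coeff n f) + n * ((n - 1).factorial * coeff (n - 1) f) := by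
  have h := congrArg (coeff n) hf
  rw [coeff_derivative, sub_mul, map_sub, coeff_C_mul] at h
  rcases n with _ | n
  · simp_all
  · rw [coeff_succ_X_mul] at h
    simp only [Nat.factorial_succ, Nat.add_sub_cancel, Nat.cast_mul]
    push_cast at h ⊢
    linear_combination (n.factorial * (n + 1) : A) * h

/-- The polynomials whose coefficient array is the exponential Appell array
`[exp(−rx + x²/2), x] = [exp(rx − x²/2), x]⁻¹` satisfy the three-term recurrence
`q₀ = 1`, `q₁ = x − r`, `qₙ₊₁ = (x − r)·qₙ + n·qₙ₋₁`; these are the orthogonal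
polynomials whose moments are the probabilists' Hermite polynomial values `Heₙ(r)`. -/
theorem hermite_moment_orthogonal_recurrence (r : ℝ) (b : ℕ → ℝ)
    (hb : ∀ m, b m = (m.factorial : ℝ) * PowerSeries.coeff (R := ℝ) m
      (psComp (PowerSeries.exp ℝ)
        (- PowerSeries.C (R := ℝ) r * PowerSeries.X + PowerSeries.C (R := ℝ) (1 / 2) * PowerSeries.X ^ 2)))
    (q : ℕ → Polynomial ℝ)
    (hq : ∀ n, q n = ∑ k ∈ Finset.range (n + 1),
      Polynomial.C ((n.choose k : ℝ) * b (n - k)) * Polynomial.X ^ k) :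
    q 0 = 1 ∧
    q 1 = Polynomial.X - Polynomial.C r ∧
    (∀ n : ℕ, 1 ≤ n →
      q (n + 1) = (Polynomial.X - Polynomial.C r) * q n + Polynomial.C (n : ℝ) * q (n - 1)) := by
  set u : ℝ⟦X⟧ := -C r * X + C (1 / 2) * X ^ 2
  have hu0 : constantCoeff u = 0 := by simp [u]
  have hu' : d⁄dX ℝ u = X - C r := by
    have h2 : (C (1 / 2 : ℝ) * 2 : ℝ⟦X⟧) = 1 := by
      rw [← map_ofNat C 2, ← map_mul]; norm_num
    simp only [u, map_add, map_neg, Derivation.leibniz, derivative_X, derivative_C, derivative_pow]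
    linear_combination X * h2
  have hE : d⁄dX ℝ (psComp (exp ℝ) u) = (X - C r) * psComp (exp ℝ) u := by
    rw [psComp_eq_subst hu0, derivative_subst (HasSubst.of_constantCoeff_zero' hu0),
      derivative_exp, hu', mul_comm]
  have hb_succ (n : ℕ) : b (n + 1) = -r * b n + n * b (n - 1) := by
    simpa only [hb] using factorial_mul_coeff_succ_of_derivative_eq_X_sub_C_mul hE n
  have hb_zero : b 0 = 1 := by simp [hb, psComp, coeff_exp]
  obtain rfl : q = Polynomial.appell b := funext hq
  refine ⟨by simp [hb_zero], ?_, fun n _ ↦ Polynomial.appell_succ hb_succ n⟩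
  simpa [hb_zero] using Polynomial.appell_succ hb_succ 0
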